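/- Let (Ω, 𝓕, P) be a probability space and let O : Ω → ℝ^n and F : Ω → ℝ^n be measurable maps. For a sample set (ω₁, …, ω_N) ∈ Ω^N, define the probabilistic sim2real gap γ*_N = max_{1 ≤ l ≤ N} ‖O(ω_l) − F(ω_l)‖ and, for each ω ∈ Ω, the one-step reachable set R(ω) = {F(ω) + d : d ∈ ℝ^n, ‖d‖ ≤ γ*_N}, i.e., the closed ball of radius γ*_N centered at F(ω). Then for every ε ∈ [0,1], the product measure P^N of the set of sample tuples (ω₁, …, ω_N) ∈ Ω^N satisfying P[{ω ∈ Ω : O(ω) ∈ R(ω)}] ≥ 1 − ε is at least 1 − (1 − ε)^N. -/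

import Mathlib

/-!
Write `g x = ‖O x - F x‖`. A fresh observation `O x` lies in `R(ω)` as soon as
`g x ≤ g (ω l)` for some sample `l`, so the confidence event can only fail when every sample
lands in `B = {x | P {g ≤ g x} < 1 - ε}`, an event of probability `P(B)^N`. Finally
`P(B) ≤ 1 - ε`: `B` is the preimage under `g` of a lower set `S ⊆ ℝ`, hence is covered by the
chain `{g ≤ t}`, `t ∈ S`, and continuity from below (`S` has countable cofinality) bounds its
measure by `⨆ t ∈ S, P {g ≤ t} ≤ 1 - ε`.
-/

open MeasureTheory Set
open scoped ENNReal

section ContinuityFromBelow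

variable {ι α : Type*} [LinearOrder ι] [TopologicalSpace ι] [OrderTopology ι]
  [SecondCountableTopology ι] [MeasurableSpace α]

theorem Monotone.measure_biUnion_of_ordConnected (μ : Measure α) {S : Set ι} [S.OrdConnected]
    {A : ι → Set α} (hA : Monotone A) : μ (⋃ t ∈ S, A t) = ⨆ t ∈ S, μ (A t) := by
  rw [biUnion_eq_iUnion, ← iSup_subtype'']
  exact Monotone.measure_iUnion (ι := S) (hA.comp (Subtype.mono_coe S))

theorem measure_setOf_measure_le_lt_le (μ : Measure α) (g : α → ι) (c : ℝ≥0∞) :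
    μ {x | μ {y | g y ≤ g x} < c} ≤ c := by
  set S : Set ι := {t | μ {y | g y ≤ t} < c}
  have hS : IsLowerSet S := fun a b hba ha =>
    (measure_mono fun y (hy : g y ≤ b) => hy.trans hba).trans_lt ha
  have := hS.ordConnected
  calc μ {x | μ {y | g y ≤ g x} < c} ≤ μ (⋃ t ∈ S, {y | g y ≤ t}) :=
        measure_mono fun x hx => mem_biUnion hx (le_refl (g x))
    _ = ⨆ t ∈ S, μ {y | g y ≤ t} :=
        Monotone.measure_biUnion_of_ordConnected μ fun a b hab y (hy : g y ≤ a) => hy.trans hab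
    _ ≤ c := iSup₂_le fun _ ht => ht.le

end ContinuityFromBelow

theorem one_sub_prod_le_measure_pi_compl {ι : Type*} [Fintype ι] {α : ι → Type*}
    [∀ i, MeasurableSpace (α i)] (μ : ∀ i, Measure (α i)) [∀ i, IsProbabilityMeasure (μ i)]
    (s : ∀ i, Set (α i)) : 1 - ∏ i, μ i (s i) ≤ Measure.pi μ (univ.pi s)ᶜ := by
  rw [← Measure.pi_pi, tsub_le_iff_left, ← measure_univ (μ := Measure.pi μ)]
  exact measure_univ_le_add_compl _

theorem uncertain_model_accuracy_general
    {Ω : Type*} [MeasurableSpace Ω] (P : Measure Ω) [IsProbabilityMeasure P]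
    (n : ℕ) (O F : Ω → EuclideanSpace ℝ (Fin n))
    (N : ℕ) (hN : 0 < N) (ε : ℝ) (hε : ε ∈ Set.Icc (0 : ℝ) 1) :
    ENNReal.ofReal (1 - (1 - ε) ^ N) ≤
      (Measure.pi fun _ : Fin N => P)
        {ω : Fin N → Ω |
          P {x : Ω |
              O x ∈
                {y : EuclideanSpace ℝ (Fin n) |
                  ∃ d : EuclideanSpace ℝ (Fin n),
                    ‖d‖ ≤
                      Finset.univ.sup'
                        (Finset.univ_nonempty_iff.mpr (Fin.pos_iff_nonempty.mp hN))
                        (fun l => ‖O (ω l) - F (ω l)‖) ∧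
                    y = F x + d}}
            ≥ ENNReal.ofReal (1 - ε)} := by
  set g : Ω → ℝ := fun x => ‖O x - F x‖
  set c := ENNReal.ofReal (1 - ε)
  set B := {x | P {y | g y ≤ g x} < c}
  have h1ε : 0 ≤ 1 - ε := sub_nonneg.mpr hε.2
  calc ENNReal.ofReal (1 - (1 - ε) ^ N) = 1 - c ^ N := by
        rw [ENNReal.ofReal_sub _ (pow_nonneg h1ε N), ENNReal.ofReal_one, ENNReal.ofReal_pow h1ε]
    _ ≤ 1 - ∏ _ : Fin N, P B := by
        rw [Finset.prod_const, Finset.card_univ, Fintype.card_fin]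
        gcongr
        exact measure_setOf_measure_le_lt_le P g c
    _ ≤ (Measure.pi fun _ : Fin N => P) (univ.pi fun _ => B)ᶜ :=
        one_sub_prod_le_measure_pi_compl _ _
    _ ≤ _ := by
        refine measure_mono fun ω hω => ?_
        obtain ⟨l, hl⟩ : ∃ l, ω l ∉ B := by simpa using hω
        refine (not_lt.mp hl).trans (measure_mono fun x (hx : g x ≤ g (ω l)) => ?_)
        exact ⟨O x - F x, hx.trans (Finset.le_sup' (fun l => g (ω l)) (Finset.mem_univ l)),
          by abel⟩

/-- Uncertain-model accuracy (Corollary 1 of the paper): letting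
`γ*_N = max_l ‖O ωₗ - F ωₗ‖` and `R(ω) = {F ω + d : ‖d‖ ≤ γ*_N}` the one-step reachable
set of the uncertain model, with confidence at least `1 - (1 - ε)^N` the observed
evolution `O ω` of a freshly sampled `ω` lies in `R(ω)` with probability at least `1 - ε`. -/
theorem uncertain_model_accuracy
    {Ω : Type*} [MeasurableSpace Ω] (P : Measure Ω) [IsProbabilityMeasure P]
    (n : ℕ) (O F : Ω → EuclideanSpace ℝ (Fin n))
    (hO : Measurable O) (hF : Measurable F)
    (N : ℕ) (hN : 0 < N) (ε : ℝ) (hε : ε ∈ Set.Icc (0 : ℝ) 1) :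
    ENNReal.ofReal (1 - (1 - ε) ^ N) ≤
      (Measure.pi fun _ : Fin N => P)
        {ω : Fin N → Ω |
          P {x : Ω |
              O x ∈
                {y : EuclideanSpace ℝ (Fin n) |
                  ∃ d : EuclideanSpace ℝ (Fin n),
                    ‖d‖ ≤
                      Finset.univ.sup'
                        (Finset.univ_nonempty_iff.mpr (Fin.pos_iff_nonempty.mp hN))
                        (fun l => ‖O (ω l) - F (ω l)‖) ∧
                    y = F x + d}}
            ≥ ENNReal.ofReal (1 - ε)} :=
  uncertain_model_accuracy_general P n O F N hN ε hε
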